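/- There exists a constant c(q) > 0, depending only on a, b, q and φ, such that for every real number λ ≥ q one has sup_{f ∈ S_α} ρ_f(q^{j₀(λ,q)+1}) / T_f(λ) ≤ c(q) λ^{−a} and sup_{f ∈ S_α} ρ_f(q^{j₀(λ,q)−1}) / T_f(λ) ≤ c(q) λ^{−a}. -/

import Mathlib

open MeasureTheory

/-- C(γ) = 2/π if γ = 1 and (1−γ)/(Γ(2−γ)cos(πγ/2)) otherwise. -/
noncomputable def Cfun (γ : ℝ) : ℝ :=
  if γ = 1 then 2 / Real.pi
  else (1 - γ) / (Real.Gamma (2 - γ) * Real.cos (Real.pi * γ / 2))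

/-- T_f(λ) = ∫_ℝ |λ⁻¹ f(x)|^{α(x)} C(α(x)) dx. -/
noncomputable def Tf (α f : ℝ → ℝ) (lam : ℝ) : ℝ :=
  ∫ x : ℝ, |lam⁻¹ * f x| ^ α x * Cfun (α x)

/-- Membership in the unit sphere S_α of F_α: f is measurable, |f|^{α(·)} is integrable,
and ‖f‖_α = 1, i.e. ∫_ℝ |f(x)|^{α(x)} dx = 1. -/
def MemSα (α f : ℝ → ℝ) : Prop :=
  Measurable f ∧ Integrable (fun x => |f x| ^ α x) ∧ (∫ x : ℝ, |f x| ^ α x) = 1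

/-- ρ_f(ξ) = ∫_ℝ |φ(θ)| · |∫ |ξ⁻¹θ f(x)|^{α(x)} dx − 1 + exp(−∫ |ξ⁻¹θ f(x)|^{α(x)} dx)| dθ. -/
noncomputable def rhoF (α f φ : ℝ → ℝ) (ξ : ℝ) : ℝ :=
  ∫ θ : ℝ, |φ θ| *
    |(∫ x : ℝ, |ξ⁻¹ * θ * f x| ^ α x) - 1 +
      Real.exp (-∫ x : ℝ, |ξ⁻¹ * θ * f x| ^ α x)|

/-- j₀(λ,q) = ⌊log λ / log q⌋. -/
noncomputable def j0 (lam q : ℝ) : ℤ :=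
  ⌊Real.log lam / Real.log q⌋

/-! Write `m(t) = ∫ |t f|^α` for the modular of `f ∈ S_α`. Since `|u - 1 + e^{-u}| ≤ u²` and
`m(θ t) ≤ (1 + |θ|)^b m(t)`, the moment condition on `φ` gives `ρ_f(ξ) ≤ M_φ m(ξ⁻¹)²`, while
`T_f(λ) ≥ c_min m(λ⁻¹)` because `C` is bounded between positive constants on `[a, b]`. Both
choices `ξ = q^{j₀ ± 1}` satisfy `λ ≤ q² ξ`, hence `m(ξ⁻¹) ≤ (1 + q²)^b m(λ⁻¹)`, and the ratio is
at most a constant times `m(λ⁻¹) ≤ λ^{-a}`. -/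

open Real Set

lemma abs_sub_one_add_exp_neg_le_sq {u : ℝ} (hu : 0 ≤ u) : |u - 1 + exp (-u)| ≤ u ^ 2 := by
  rcases le_or_gt u 1 with h | h
  · have := abs_exp_sub_one_sub_id_le (x := -u) (by rwa [abs_neg, abs_of_nonneg hu])
    rwa [show exp (-u) - 1 - -u = u - 1 + exp (-u) by ring, neg_sq] at this
  · have := add_one_le_exp (-u)
    have : exp (-u) ≤ 1 := exp_le_one_iff.2 (by linarith)
    rw [abs_of_nonneg (by linarith)]
    nlinarith

lemma div_sin_mem_Icc {u : ℝ} (h0 : 0 < u) (h1 : u < 1) :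
    u / sin (π * u / 2) ∈ Icc (2 / π) 1 := by
  have hu : u = 2 / π * (π * u / 2) := by field_simp
  have ht0 : 0 < π * u / 2 := by positivity
  have hsin : 0 < sin (π * u / 2) := sin_pos_of_pos_of_lt_pi ht0 (by nlinarith [pi_pos])
  constructor
  · calc 2 / π = u / (π * u / 2) := by field_simp
      _ ≤ u / sin (π * u / 2) := div_le_div_of_nonneg_left h0.le hsin (sin_lt ht0).le
  · rw [div_le_one hsin]
    exact hu.trans_le (mul_le_sin ht0.le (by nlinarith [pi_pos]))

lemma div_cos_mem_Icc {γ : ℝ} (h0 : 0 < γ) (h2 : γ < 2) (h1 : γ ≠ 1) :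
    (1 - γ) / cos (π * γ / 2) ∈ Icc (2 / π) 1 := by
  rcases lt_or_gt_of_ne h1 with h | h
  · have := div_sin_mem_Icc (u := 1 - γ) (by linarith) (by linarith)
    rwa [← cos_pi_div_two_sub, show π / 2 - π * (1 - γ) / 2 = π * γ / 2 by ring] at this
  · have hcos : cos (π * γ / 2) = -sin (π * (γ - 1) / 2) := by
      rw [← sin_neg, ← cos_pi_div_two_sub]; ring_nf
    rw [hcos, div_neg, ← neg_div, neg_sub]
    exact div_sin_mem_Icc (by linarith) (by linarith)

lemma Cfun_mem_Icc {γ : ℝ} (h0 : 0 < γ) (h2 : γ < 2) :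
    Cfun γ ∈ Icc (2 / π / Gamma (2 - γ)) (1 / Gamma (2 - γ)) := by
  have hΓ : 0 < Gamma (2 - γ) := Gamma_pos_of_pos (by linarith)
  by_cases h1 : γ = 1
  · subst h1
    norm_num [Cfun, div_le_one pi_pos, two_le_pi]
  · obtain ⟨hlo, hhi⟩ := div_cos_mem_Icc h0 h2 h1
    rw [Cfun, if_neg h1, mul_comm, ← div_div]
    exact ⟨div_le_div_of_nonneg_right hlo hΓ.le, div_le_div_of_nonneg_right hhi hΓ.le⟩

lemma Real.measurable_Gamma : Measurable Gamma := by
  refine measurable_of_countable_not_continuousAt <|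
    (countable_range fun n : ℕ => -(n : ℝ)).mono fun s hs => ?_
  by_contra h
  exact hs (differentiableAt_Gamma fun m hm => h ⟨m, hm.symm⟩).continuousAt

lemma measurable_Cfun : Measurable Cfun :=
  Measurable.ite (measurableSet_singleton 1) measurable_const <| by
    have := Real.measurable_Gamma
    fun_prop

lemma exists_Cfun_bounds {a b : ℝ} (ha : 0 < a) (hb : b < 2) :
    ∃ cmin cmax : ℝ, 0 < cmin ∧ ∀ γ ∈ Icc a b, cmin ≤ Cfun γ ∧ Cfun γ ≤ cmax := by
  have hK : IsCompact (Icc (2 - b) (2 - a)) := isCompact_Icc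
  have hpos : ∀ s ∈ Icc (2 - b) (2 - a), 0 < s := fun s hs => by linarith [hs.1]
  have hcont : ContinuousOn Gamma (Icc (2 - b) (2 - a)) := fun s hs =>
    have hs' : ∀ m : ℕ, s ≠ -m := fun m => by linarith [hpos s hs, m.cast_nonneg (α := ℝ)]
    (differentiableAt_Gamma hs').continuousAt.continuousWithinAt
  obtain ⟨Γmin, hΓmin, hmin⟩ :=
    hK.exists_forall_le' hcont fun s hs => Gamma_pos_of_pos (hpos s hs)
  obtain ⟨M, hM⟩ := hK.bddAbove_image hcont
  refine ⟨2 / π / max M 1, 1 / Γmin, by positivity, fun γ hγ => ?_⟩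
  have hs : 2 - γ ∈ Icc (2 - b) (2 - a) := ⟨by linarith [hγ.2], by linarith [hγ.1]⟩
  obtain ⟨hlo, hhi⟩ := Cfun_mem_Icc (γ := γ) (by linarith [hγ.1]) (by linarith [hpos _ hs])
  have hΓ : 0 < Gamma (2 - γ) := Gamma_pos_of_pos (hpos _ hs)
  refine ⟨le_trans ?_ hlo, hhi.trans ?_⟩
  · exact div_le_div_of_nonneg_left (by positivity) hΓ
      ((hM (mem_image_of_mem _ hs)).trans (le_max_left _ _))
  · exact div_le_div_of_nonneg_left zero_le_one hΓmin (hmin _ hs)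

noncomputable def modular (α f : ℝ → ℝ) (t : ℝ) : ℝ :=
  ∫ x, |t * f x| ^ α x

lemma abs_mul_rpow_le {t y γ b : ℝ} (hγ : γ ∈ Icc 0 b) :
    |t * y| ^ γ ≤ (1 + |t|) ^ b * |y| ^ γ := by
  rw [abs_mul, mul_rpow (abs_nonneg _) (abs_nonneg _)]
  gcongr
  calc |t| ^ γ ≤ (1 + |t|) ^ γ := rpow_le_rpow (abs_nonneg _) (by linarith) hγ.1
    _ ≤ (1 + |t|) ^ b := rpow_le_rpow_of_exponent_le (by linarith [abs_nonneg t]) hγ.2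

lemma abs_inv_mul_rpow_le {lam y γ a : ℝ} (hlam : 1 ≤ lam) (hγ : a ≤ γ) :
    |lam⁻¹ * y| ^ γ ≤ lam ^ (-a) * |y| ^ γ := by
  have hlam0 : 0 < lam := one_pos.trans_le hlam
  rw [abs_mul, abs_inv, abs_of_pos hlam0, mul_rpow (by positivity) (abs_nonneg _),
    rpow_neg hlam0.le, ← inv_rpow hlam0.le]
  exact mul_le_mul_of_nonneg_right
    (rpow_le_rpow_of_exponent_ge (by positivity) (inv_le_one_of_one_le₀ hlam) hγ)
    (rpow_nonneg (abs_nonneg _) _)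

section Modular

variable {α f : ℝ → ℝ} {b : ℝ}

lemma modular_nonneg (t : ℝ) : 0 ≤ modular α f t :=
  integral_nonneg fun _ => rpow_nonneg (abs_nonneg _) _

lemma integrable_abs_mul_rpow (hα : ∀ x, α x ∈ Icc 0 b)
    (hfi : Integrable fun x => |f x| ^ α x) (hαm : Measurable α) (hfm : Measurable f) (t : ℝ) :
    Integrable fun x => |t * f x| ^ α x :=
  (hfi.const_mul ((1 + |t|) ^ b)).mono'
    ((measurable_const.mul hfm).abs.pow hαm).aestronglyMeasurable <| ae_of_all _ fun x => by
    rw [norm_of_nonneg (rpow_nonneg (abs_nonneg _) _)]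
    exact abs_mul_rpow_le (hα x)

lemma modular_mul_le (hα : ∀ x, α x ∈ Icc 0 b) (hfi : Integrable fun x => |f x| ^ α x)
    (hαm : Measurable α) (hfm : Measurable f) (t s : ℝ) :
    modular α f (t * s) ≤ (1 + |t|) ^ b * modular α f s := by
  rw [modular, modular, ← integral_const_mul]
  refine integral_mono (integrable_abs_mul_rpow hα hfi hαm hfm _)
    ((integrable_abs_mul_rpow hα hfi hαm hfm _).const_mul _) fun x => ?_
  rw [mul_assoc]
  exact abs_mul_rpow_le (hα x)

lemma modular_pos (hα : ∀ x, α x ∈ Icc 0 b) (hfi : Integrable fun x => |f x| ^ α x)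
    (hαm : Measurable α) (hfm : Measurable f) (hf : 0 < modular α f 1) {t : ℝ} (ht : t ≠ 0) :
    0 < modular α f t := by
  have := modular_mul_le hα hfi hαm hfm t⁻¹ t
  rw [inv_mul_cancel₀ ht] at this
  exact pos_of_mul_pos_right (hf.trans_le this) (by positivity)

lemma modular_inv_le {a : ℝ} (hα : ∀ x, a ≤ α x)
    (hfi : Integrable fun x => |f x| ^ α x) {lam : ℝ} (hlam : 1 ≤ lam) :
    modular α f lam⁻¹ ≤ lam ^ (-a) * modular α f 1 := by
  simp only [modular, one_mul]
  rw [← integral_const_mul]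
  exact integral_mono_of_nonneg (ae_of_all _ fun _ => rpow_nonneg (abs_nonneg _) _)
    (hfi.const_mul _) (ae_of_all _ fun x => abs_inv_mul_rpow_le hlam (hα x))

end Modular

lemma rhoF_eq (α f φ : ℝ → ℝ) (ξ : ℝ) :
    rhoF α f φ ξ = ∫ θ, |φ θ| *
      |modular α f (ξ⁻¹ * θ) - 1 + exp (-modular α f (ξ⁻¹ * θ))| := rfl

lemma rhoF_le_sq_modular {α f φ : ℝ → ℝ} {b : ℝ} (hα : ∀ x, α x ∈ Icc 0 b)
    (hfi : Integrable fun x => |f x| ^ α x) (hαm : Measurable α) (hfm : Measurable f)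
    (hφ : Integrable fun θ => (1 + |θ|) ^ (2 * b) * |φ θ|) (ξ : ℝ) :
    rhoF α f φ ξ ≤ (∫ θ, (1 + |θ|) ^ (2 * b) * |φ θ|) * modular α f ξ⁻¹ ^ 2 := by
  rw [rhoF_eq, ← integral_mul_const]
  refine integral_mono_of_nonneg (ae_of_all _ fun _ => by positivity) (hφ.mul_const _)
    (ae_of_all _ fun θ => ?_)
  have hm := modular_mul_le hα hfi hαm hfm θ ξ⁻¹
  rw [mul_comm θ] at hm
  calc |φ θ| * |modular α f (ξ⁻¹ * θ) - 1 + exp (-modular α f (ξ⁻¹ * θ))|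
      ≤ |φ θ| * ((1 + |θ|) ^ b * modular α f ξ⁻¹) ^ 2 := by
        gcongr
        exact (abs_sub_one_add_exp_neg_le_sq (modular_nonneg _)).trans
          (pow_le_pow_left₀ (modular_nonneg _) hm 2)
    _ = (1 + |θ|) ^ (2 * b) * |φ θ| * modular α f ξ⁻¹ ^ 2 := by
        rw [mul_comm 2 b, rpow_mul (by positivity), rpow_two]
        ring

lemma mul_modular_inv_le_Tf {α f : ℝ → ℝ} {b cmin cmax : ℝ} (hα : ∀ x, α x ∈ Icc 0 b)
    (hfi : Integrable fun x => |f x| ^ α x) (hαm : Measurable α) (hfm : Measurable f)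
    (hC : ∀ x, cmin ≤ Cfun (α x) ∧ Cfun (α x) ≤ cmax) (lam : ℝ) :
    cmin * modular α f lam⁻¹ ≤ Tf α f lam := by
  have hint := integrable_abs_mul_rpow hα hfi hαm hfm lam⁻¹
  have hCm : Measurable fun x => Cfun (α x) := measurable_Cfun.comp hαm
  rw [modular, ← integral_const_mul, Tf]
  refine integral_mono (hint.const_mul _) (hint.mul_bdd (c := max |cmin| |cmax|)
    hCm.aestronglyMeasurable (ae_of_all _ fun x => ?_)) fun x => ?_
  · rw [norm_eq_abs, abs_le]
    constructor <;> linarith [hC x, neg_abs_le cmin, le_abs_self cmax, le_max_left |cmin| |cmax|,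
      le_max_right |cmin| |cmax|]
  · rw [mul_comm]
    exact mul_le_mul_of_nonneg_left (hC x).1 (rpow_nonneg (abs_nonneg _) _)

lemma rhoF_div_Tf_le {α f φ : ℝ → ℝ} {a b cmin cmax K lam ξ : ℝ} (ha : 0 ≤ a)
    (hα : ∀ x, α x ∈ Icc a b) (hαm : Measurable α) (hf : MemSα α f)
    (hφ : Integrable fun θ => (1 + |θ|) ^ (2 * b) * |φ θ|)
    (hcmin : 0 < cmin) (hC : ∀ x, cmin ≤ Cfun (α x) ∧ Cfun (α x) ≤ cmax)
    (hK : 0 ≤ K) (hlam : 1 ≤ lam) (hξ : 0 < ξ) (hlamξ : lam ≤ K * ξ) :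
    rhoF α f φ ξ / Tf α f lam ≤
      (∫ θ, (1 + |θ|) ^ (2 * b) * |φ θ|) * (1 + K) ^ (2 * b) / cmin * lam ^ (-a) := by
  obtain ⟨hfm, hfi, hf1⟩ := hf
  have hα0 : ∀ x, α x ∈ Icc 0 b := fun x => ⟨ha.trans (hα x).1, (hα x).2⟩
  have hlam0 : 0 < lam := one_pos.trans_le hlam
  have hm1 : modular α f 1 = 1 := by simpa only [modular, one_mul] using hf1
  set Mφ := ∫ θ, (1 + |θ|) ^ (2 * b) * |φ θ|
  set m := modular α f lam⁻¹
  have hMφ : 0 ≤ Mφ := integral_nonneg fun _ => by positivity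
  have hm : 0 < m :=
    modular_pos hα0 hfi hαm hfm (by rw [hm1]; exact one_pos) (inv_ne_zero hlam0.ne')
  have hmlam : m ≤ lam ^ (-a) := by
    simpa only [hm1, mul_one] using modular_inv_le (fun x => (hα x).1) hfi hlam
  have hmξ : modular α f ξ⁻¹ ≤ (1 + K) ^ b * m := by
    have := modular_mul_le hα0 hfi hαm hfm (lam * ξ⁻¹) lam⁻¹
    rw [show lam * ξ⁻¹ * lam⁻¹ = ξ⁻¹ by field_simp, abs_of_pos (by positivity)] at this
    have hb : 0 ≤ b := (hα0 0).1.trans (hα0 0).2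
    exact this.trans (by gcongr; rwa [mul_inv_le_iff₀ hξ])
  have hT : cmin * m ≤ Tf α f lam := mul_modular_inv_le_Tf hα0 hfi hαm hfm hC lam
  calc rhoF α f φ ξ / Tf α f lam ≤ Mφ * ((1 + K) ^ b * m) ^ 2 / (cmin * m) := by
        refine div_le_div₀ (by positivity) ?_ (by positivity) hT
        exact (rhoF_le_sq_modular hα0 hfi hαm hfm hφ ξ).trans
          (by gcongr; exact modular_nonneg _)
    _ = Mφ * (1 + K) ^ (2 * b) / cmin * m := by
        rw [mul_comm 2 b, rpow_mul (by positivity), rpow_two]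
        field_simp
    _ ≤ Mφ * (1 + K) ^ (2 * b) / cmin * lam ^ (-a) := by gcongr

lemma lt_zpow_j0_add_one {lam q : ℝ} (hq : 1 < q) (hlam : 0 < lam) :
    lam < q ^ (j0 lam q + 1) := by
  have : logb q lam < ((j0 lam q + 1 : ℤ) : ℝ) := by
    push_cast
    exact Int.lt_floor_add_one _
  rwa [logb_lt_iff_lt_rpow hq hlam, rpow_intCast] at this

theorem rho_ratio_bound_general
    (a b : ℝ) (ha : 0 < a) (hb : b < 2)
    (α : ℝ → ℝ) (hαm : Measurable α) (hα : ∀ x, α x ∈ Set.Icc a b)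
    (q : ℝ) (hq : 1 < q)
    (φ : ℝ → ℝ)
    (hφmom : Integrable (fun θ : ℝ => (1 + |θ|) ^ (2 * b) * |φ θ|)) :
    ∃ c : ℝ, 0 < c ∧ ∀ lam : ℝ, q ≤ lam → ∀ f, MemSα α f →
      rhoF α f φ (q ^ (j0 lam q + 1)) / Tf α f lam ≤ c * lam ^ (-a) ∧
      rhoF α f φ (q ^ (j0 lam q - 1)) / Tf α f lam ≤ c * lam ^ (-a) := by
  obtain ⟨cmin, cmax, hcmin, hC⟩ := exists_Cfun_bounds ha hb
  set Mφ := ∫ θ, (1 + |θ|) ^ (2 * b) * |φ θ|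
  have hMφ : 0 ≤ Mφ := integral_nonneg fun _ => by positivity
  have hq0 : 0 < q := one_pos.trans hq
  refine ⟨(Mφ + 1) * (1 + q ^ 2) ^ (2 * b) / cmin, by positivity, fun lam hlam f hf => ?_⟩
  have hlam1 : 1 ≤ lam := hq.le.trans hlam
  have hlt := lt_zpow_j0_add_one hq (one_pos.trans_le hlam1)
  have key : ∀ ξ : ℝ, 0 < ξ → lam ≤ q ^ 2 * ξ →
      rhoF α f φ ξ / Tf α f lam ≤ (Mφ + 1) * (1 + q ^ 2) ^ (2 * b) / cmin * lam ^ (-a) :=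
    fun ξ hξ hlamξ => (rhoF_div_Tf_le ha.le hα hαm hf hφmom hcmin (fun x => hC _ (hα x))
      (by positivity) hlam1 hξ hlamξ).trans (by gcongr; linarith)
  refine ⟨key _ (zpow_pos hq0 _) ?_, key _ (zpow_pos hq0 _) ?_⟩
  · exact hlt.le.trans (le_mul_of_one_le_left (zpow_pos hq0 _).le (one_le_pow₀ hq.le))
  · rw [← zpow_natCast, ← zpow_add₀ hq0.ne', Nat.cast_ofNat, show (2 : ℤ) + (j0 lam q - 1) = j0 lam q + 1 by ring]
    exact hlt.le

/-- there is a constant c(q) > 0 such that for all λ ≥ q,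
sup_{f∈S_α} ρ_f(q^{j₀(λ,q)+1})/T_f(λ) ≤ c(q) λ^{−a} and
sup_{f∈S_α} ρ_f(q^{j₀(λ,q)−1})/T_f(λ) ≤ c(q) λ^{−a}. -/
theorem rho_ratio_bound
    (a b : ℝ) (ha : 0 < a) (hab : a < b) (hb : b < 2)
    (α : ℝ → ℝ) (hαm : Measurable α) (hα : ∀ x, α x ∈ Set.Icc a b)
    (q : ℝ) (hq : 1 < q)
    (φ : ℝ → ℝ) (hφm : Measurable φ)
    (hφmom : Integrable (fun θ : ℝ => (1 + |θ|) ^ (2 * b) * |φ θ|)) :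
    ∃ c : ℝ, 0 < c ∧ ∀ lam : ℝ, q ≤ lam → ∀ f, MemSα α f →
      rhoF α f φ (q ^ (j0 lam q + 1)) / Tf α f lam ≤ c * lam ^ (-a) ∧
      rhoF α f φ (q ^ (j0 lam q - 1)) / Tf α f lam ≤ c * lam ^ (-a) :=
  rho_ratio_bound_general a b ha hb α hαm hα q hq φ hφmom
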